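/- The compatibility condition of the two linear problems L₁S = S_t − zS_x − {S,Θ_x} = 0 and L₂S = S_{t̃} − zS_y − {S,Θ_y} = 0 is exactly the second heavenly equation: for smooth Θ(x,y,t,t̃) and any smooth scalar ψ(x,y,t,t̃), the commutator satisfies [L₁, L₂]ψ = {ψ, Θ_{ty} − Θ_{t̃x} + Θ_{xx}Θ_{yy} − Θ_{xy}²} up to sign; in particular [L₁,L₂] = 0 as operators for all z if and only if Θ_{ty} − Θ_{t̃x} − Θ_{xy}² + Θ_{xx}Θ_{yy} is constant in (x,y) (and = 0 when it vanishes at one point). -/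

import Mathlib

/-- Partial derivative on ℝ⁴ (0 = x, 1 = y, 2 = t, 3 = t̃). -/
noncomputable def pd (i : Fin 4) (f : (Fin 4 → ℝ) → ℝ) : (Fin 4 → ℝ) → ℝ :=
  fun x => fderiv ℝ f x (Pi.single i 1)

/-- Canonical Poisson bracket in (x,y): {F,H} = F_x H_y − F_y H_x. -/
noncomputable def pb (f g : (Fin 4 → ℝ) → ℝ) : (Fin 4 → ℝ) → ℝ :=
  fun x => pd 0 f x * pd 1 g x - pd 1 f x * pd 0 g x

/-- The operator L₁ = ∂_t − z∂_x − {·, Θ_x}. -/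
noncomputable def L1 (Θ : (Fin 4 → ℝ) → ℝ) (z : ℝ) (f : (Fin 4 → ℝ) → ℝ) :
    (Fin 4 → ℝ) → ℝ :=
  fun x => pd 2 f x - z * pd 0 f x - pb f (pd 0 Θ) x

/-- The operator L₂ = ∂_t̃ − z∂_y − {·, Θ_y}. -/
noncomputable def L2 (Θ : (Fin 4 → ℝ) → ℝ) (z : ℝ) (f : (Fin 4 → ℝ) → ℝ) :
    (Fin 4 → ℝ) → ℝ :=
  fun x => pd 3 f x - z * pd 1 f x - pb f (pd 1 Θ) x

/-- The second heavenly expression H(Θ) = Θ_ty − Θ_t̃x − Θ_xy² + Θ_xx Θ_yy. -/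
noncomputable def heav (Θ : (Fin 4 → ℝ) → ℝ) : (Fin 4 → ℝ) → ℝ :=
  fun x => pd 2 (pd 1 Θ) x - pd 3 (pd 0 Θ) x - (pd 1 (pd 0 Θ) x) ^ 2
    + pd 0 (pd 0 Θ) x * pd 1 (pd 1 Θ) x

/- ### Toolkit lemmas -/

lemma pd_smooth {f} (hf : ContDiff ℝ (⊤ : ℕ∞) f) (i : Fin 4) : ContDiff ℝ (⊤ : ℕ∞) (pd i f) :=
  (hf.fderiv_right (by simp)).clm_apply contDiff_const

lemma pd_comm {f} (hf : ContDiff ℝ (⊤ : ℕ∞) f) (i j : Fin 4) (x) :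
    pd i (pd j f) x = pd j (pd i f) x := by
  have hd : Differentiable ℝ (fderiv ℝ f) := (hf.fderiv_right (m := (⊤ : ℕ∞)) (by simp)).differentiable (by simp)
  have h2 : ∀ k l : Fin 4, pd k (pd l f) x =
      fderiv ℝ (fderiv ℝ f) x (Pi.single k 1) (Pi.single l 1) := by
    intro k l
    unfold pd
    rw [fderiv_clm_apply (hd x) (differentiableAt_const _)]
    simp
  rw [h2, h2]
  exact second_derivative_symmetric (fun y => (hf.differentiable (by simp) y).hasFDerivAt)
    (hd x).hasFDerivAt _ _

lemma pd_sub {f g} (hf : Differentiable ℝ f) (hg : Differentiable ℝ g) (i : Fin 4) (x) :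
    pd i (fun y => f y - g y) x = pd i f x - pd i g x := by
  unfold pd; rw [fderiv_fun_sub (hf x) (hg x)]; rfl

lemma pd_add {f g} (hf : Differentiable ℝ f) (hg : Differentiable ℝ g) (i : Fin 4) (x) :
    pd i (fun y => f y + g y) x = pd i f x + pd i g x := by
  unfold pd; rw [fderiv_fun_add (hf x) (hg x)]; rfl

lemma pd_mul {f g} (hf : Differentiable ℝ f) (hg : Differentiable ℝ g) (i : Fin 4) (x) :
    pd i (fun y => f y * g y) x = pd i f x * g x + f x * pd i g x := by
  unfold pd; rw [fderiv_fun_mul (hf x) (hg x)]; simp; ring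

lemma pd_const_mul {f} (hf : Differentiable ℝ f) (c : ℝ) (i : Fin 4) (x) :
    pd i (fun y => c * f y) x = c * pd i f x := by
  unfold pd; rw [fderiv_const_mul (hf x)]; rfl

lemma pd_sq {f} (hf : Differentiable ℝ f) (i : Fin 4) (x) :
    pd i (fun y => f y ^ 2) x = 2 * f x * pd i f x := by
  have h : (fun y => f y ^ 2) = fun y => f y * f y := by funext y; ring
  rw [h, pd_mul hf hf]; ring

lemma pd_const (c : ℝ) (i : Fin 4) (x) : pd i (fun _ => c) x = 0 := by
  unfold pd; simp

lemma pd_proj (j : Fin 4) (i : Fin 4) (x) :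
    pd i (fun v => v j) x = (Pi.single i (1:ℝ) : Fin 4 → ℝ) j := by
  have h : (fun v : Fin 4 → ℝ => v j) = (ContinuousLinearMap.proj j : (Fin 4 → ℝ) →L[ℝ] ℝ) := rfl
  unfold pd
  rw [h, ContinuousLinearMap.fderiv]
  rfl

lemma pb_smooth {f g} (hf : ContDiff ℝ (⊤ : ℕ∞) f) (hg : ContDiff ℝ (⊤ : ℕ∞) g) :
    ContDiff ℝ (⊤ : ℕ∞) (pb f g) := by
  unfold pb
  exact ((pd_smooth hf 0).mul (pd_smooth hg 1)).sub ((pd_smooth hf 1).mul (pd_smooth hg 0))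

lemma pd_pb {f g} (hf : ContDiff ℝ (⊤ : ℕ∞) f) (hg : ContDiff ℝ (⊤ : ℕ∞) g) (i : Fin 4) (x) :
    pd i (pb f g) x =
      pd i (pd 0 f) x * pd 1 g x + pd 0 f x * pd i (pd 1 g) x
      - (pd i (pd 1 f) x * pd 0 g x + pd 1 f x * pd i (pd 0 g) x) := by
  have d0f := (pd_smooth hf 0).differentiable (by simp)
  have d1f := (pd_smooth hf 1).differentiable (by simp)
  have d0g := (pd_smooth hg 0).differentiable (by simp)
  have d1g := (pd_smooth hg 1).differentiable (by simp)
  unfold pb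
  rw [pd_sub (d0f.fun_mul d1g) (d1f.fun_mul d0g), pd_mul d0f d1g, pd_mul d1f d0g]

lemma pd_L2 {Θ ψ} (hΘ : ContDiff ℝ (⊤ : ℕ∞) Θ) (hψ : ContDiff ℝ (⊤ : ℕ∞) ψ) (z : ℝ) (i : Fin 4) (x) :
    pd i (L2 Θ z ψ) x = pd i (pd 3 ψ) x - z * pd i (pd 1 ψ) x
      - (pd i (pd 0 ψ) x * pd 1 (pd 1 Θ) x + pd 0 ψ x * pd i (pd 1 (pd 1 Θ)) x
        - (pd i (pd 1 ψ) x * pd 0 (pd 1 Θ) x + pd 1 ψ x * pd i (pd 0 (pd 1 Θ)) x)) := by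
  have d3 := (pd_smooth hψ 3).differentiable (by simp)
  have d1 := (pd_smooth hψ 1).differentiable (by simp)
  have dpb : Differentiable ℝ (pb ψ (pd 1 Θ)) :=
    (pb_smooth hψ (pd_smooth hΘ 1)).differentiable (by simp)
  unfold L2
  rw [pd_sub (d3.fun_sub (d1.const_mul z)) dpb, pd_sub d3 (d1.const_mul z),
    pd_const_mul d1, pd_pb hψ (pd_smooth hΘ 1)]

lemma pd_L1 {Θ ψ} (hΘ : ContDiff ℝ (⊤ : ℕ∞) Θ) (hψ : ContDiff ℝ (⊤ : ℕ∞) ψ) (z : ℝ) (i : Fin 4) (x) :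
    pd i (L1 Θ z ψ) x = pd i (pd 2 ψ) x - z * pd i (pd 0 ψ) x
      - (pd i (pd 0 ψ) x * pd 1 (pd 0 Θ) x + pd 0 ψ x * pd i (pd 1 (pd 0 Θ)) x
        - (pd i (pd 1 ψ) x * pd 0 (pd 0 Θ) x + pd 1 ψ x * pd i (pd 0 (pd 0 Θ)) x)) := by
  have d2 := (pd_smooth hψ 2).differentiable (by simp)
  have d0 := (pd_smooth hψ 0).differentiable (by simp)
  have dpb : Differentiable ℝ (pb ψ (pd 0 Θ)) :=
    (pb_smooth hψ (pd_smooth hΘ 0)).differentiable (by simp)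
  unfold L1
  rw [pd_sub (d2.fun_sub (d0.const_mul z)) dpb, pd_sub d2 (d0.const_mul z),
    pd_const_mul d0, pd_pb hψ (pd_smooth hΘ 0)]

lemma pd_heav {Θ} (hΘ : ContDiff ℝ (⊤ : ℕ∞) Θ) (i : Fin 4) (x) :
    pd i (heav Θ) x = pd i (pd 2 (pd 1 Θ)) x - pd i (pd 3 (pd 0 Θ)) x
      - 2 * pd 1 (pd 0 Θ) x * pd i (pd 1 (pd 0 Θ)) x
      + (pd i (pd 0 (pd 0 Θ)) x * pd 1 (pd 1 Θ) x
        + pd 0 (pd 0 Θ) x * pd i (pd 1 (pd 1 Θ)) x) := by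
  have d21 := (pd_smooth (pd_smooth hΘ 1) 2).differentiable (by simp)
  have d30 := (pd_smooth (pd_smooth hΘ 0) 3).differentiable (by simp)
  have d10 := (pd_smooth (pd_smooth hΘ 0) 1).differentiable (by simp)
  have d00 := (pd_smooth (pd_smooth hΘ 0) 0).differentiable (by simp)
  have d11 := (pd_smooth (pd_smooth hΘ 1) 1).differentiable (by simp)
  unfold heav
  rw [pd_add ((d21.fun_sub d30).fun_sub (d10.fun_pow 2)) (d00.fun_mul d11),
    pd_sub (d21.fun_sub d30) (d10.fun_pow 2), pd_sub d21 d30, pd_sq d10, pd_mul d00 d11]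

lemma key {Θ ψ} (hΘ : ContDiff ℝ (⊤ : ℕ∞) Θ) (hψ : ContDiff ℝ (⊤ : ℕ∞) ψ) (z : ℝ) (x) :
    L1 Θ z (L2 Θ z ψ) x - L2 Θ z (L1 Θ z ψ) x = - pb ψ (heav Θ) x := by
  have e1 : L1 Θ z (L2 Θ z ψ) x = pd 2 (L2 Θ z ψ) x - z * pd 0 (L2 Θ z ψ) x
      - (pd 0 (L2 Θ z ψ) x * pd 1 (pd 0 Θ) x - pd 1 (L2 Θ z ψ) x * pd 0 (pd 0 Θ) x) := rfl
  have e2 : L2 Θ z (L1 Θ z ψ) x = pd 3 (L1 Θ z ψ) x - z * pd 1 (L1 Θ z ψ) x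
      - (pd 0 (L1 Θ z ψ) x * pd 1 (pd 1 Θ) x - pd 1 (L1 Θ z ψ) x * pd 0 (pd 1 Θ) x) := rfl
  have e3 : pb ψ (heav Θ) x
      = pd 0 ψ x * pd 1 (heav Θ) x - pd 1 ψ x * pd 0 (heav Θ) x := rfl
  rw [e1, e2, e3, pd_L2 hΘ hψ z 2 x, pd_L2 hΘ hψ z 0 x, pd_L2 hΘ hψ z 1 x,
    pd_L1 hΘ hψ z 3 x, pd_L1 hΘ hψ z 0 x, pd_L1 hΘ hψ z 1 x,
    pd_heav hΘ 0 x, pd_heav hΘ 1 x]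
  -- canonicalize second derivatives of ψ
  rw [pd_comm hψ 2 1 x, pd_comm hψ 2 0 x, pd_comm hψ 1 0 x,
    pd_comm hψ 3 2 x, pd_comm hψ 3 0 x, pd_comm hψ 3 1 x]
  -- step 1: outer swaps for third derivatives of Θ
  rw [pd_comm (pd_smooth hΘ 1) 2 1 x, pd_comm (pd_smooth hΘ 1) 2 0 x,
    pd_comm (pd_smooth hΘ 1) 1 0 x, pd_comm (pd_smooth hΘ 0) 3 1 x,
    pd_comm (pd_smooth hΘ 0) 3 0 x, pd_comm (pd_smooth hΘ 0) 1 0 x]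
  -- step 2: inner (function-level) swaps
  have e10 : pd 1 (pd 0 Θ) = pd 0 (pd 1 Θ) := funext fun y => pd_comm hΘ 1 0 y
  have e21 : pd 2 (pd 1 Θ) = pd 1 (pd 2 Θ) := funext fun y => pd_comm hΘ 2 1 y
  have e30 : pd 3 (pd 0 Θ) = pd 0 (pd 3 Θ) := funext fun y => pd_comm hΘ 3 0 y
  rw [e10, e21, e30]
  -- step 3: remaining outer swaps
  rw [pd_comm (pd_smooth hΘ 1) 1 0 x, pd_comm (pd_smooth hΘ 3) 1 0 x]
  ring

theorem stmt8 (Θ : (Fin 4 → ℝ) → ℝ) (hΘ : ContDiff ℝ (⊤ : ℕ∞) Θ) :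
    (∀ (z : ℝ) (ψ : (Fin 4 → ℝ) → ℝ), ContDiff ℝ (⊤ : ℕ∞) ψ →
      ∀ x, L1 Θ z (L2 Θ z ψ) x - L2 Θ z (L1 Θ z ψ) x = - pb ψ (heav Θ) x)
    ∧ ((∀ (z : ℝ) (ψ : (Fin 4 → ℝ) → ℝ), ContDiff ℝ (⊤ : ℕ∞) ψ →
        ∀ x, L1 Θ z (L2 Θ z ψ) x - L2 Θ z (L1 Θ z ψ) x = 0)
      ↔ ∀ x, pd 0 (heav Θ) x = 0 ∧ pd 1 (heav Θ) x = 0)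
    ∧ ((∀ x, heav Θ x = 0) →
        ∀ (z : ℝ) (ψ : (Fin 4 → ℝ) → ℝ), ContDiff ℝ (⊤ : ℕ∞) ψ →
          ∀ x, L1 Θ z (L2 Θ z ψ) x - L2 Θ z (L1 Θ z ψ) x = 0) := by
  have hcoord : ∀ j : Fin 4, ContDiff ℝ (⊤ : ℕ∞) (fun v : Fin 4 → ℝ => v j) := by
    intro j
    exact (ContinuousLinearMap.proj j : (Fin 4 → ℝ) →L[ℝ] ℝ).contDiff
  refine ⟨fun z ψ hψ x => key hΘ hψ z x, ⟨?_, ?_⟩, ?_⟩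
  · intro h x
    constructor
    · have h1 := key hΘ (hcoord 1) 0 x
      rw [h 0 _ (hcoord 1) x] at h1
      have e : pb (fun v : Fin 4 → ℝ => v 1) (heav Θ) x
          = pd 0 (fun v : Fin 4 → ℝ => v 1) x * pd 1 (heav Θ) x
            - pd 1 (fun v : Fin 4 → ℝ => v 1) x * pd 0 (heav Θ) x := rfl
      rw [e, pd_proj 1 0 x, pd_proj 1 1 x] at h1
      simp [Pi.single_eq_same, Pi.single_eq_of_ne] at h1
      linarith
    · have h1 := key hΘ (hcoord 0) 0 x
      rw [h 0 _ (hcoord 0) x] at h1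
      have e : pb (fun v : Fin 4 → ℝ => v 0) (heav Θ) x
          = pd 0 (fun v : Fin 4 → ℝ => v 0) x * pd 1 (heav Θ) x
            - pd 1 (fun v : Fin 4 → ℝ => v 0) x * pd 0 (heav Θ) x := rfl
      rw [e, pd_proj 0 0 x, pd_proj 0 1 x] at h1
      simp [Pi.single_eq_same, Pi.single_eq_of_ne] at h1
      linarith
  · intro h z ψ hψ x
    rw [key hΘ hψ z x]
    have e : pb ψ (heav Θ) x
        = pd 0 ψ x * pd 1 (heav Θ) x - pd 1 ψ x * pd 0 (heav Θ) x := rfl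
    rw [e, (h x).1, (h x).2]
    ring
  · intro h z ψ hψ x
    rw [key hΘ hψ z x]
    have hz : heav Θ = fun _ => (0:ℝ) := funext h
    have e : pb ψ (heav Θ) x
        = pd 0 ψ x * pd 1 (heav Θ) x - pd 1 ψ x * pd 0 (heav Θ) x := rfl
    rw [e, hz, pd_const, pd_const]
    ring
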